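/- arXiv:1003.4936 — 2 statements merged into one kernel-verified Lean document; each statement's English description precedes it below -/
import Mathlib

section
/- Let E be a real vector space, let C ⊆ E be a salient convex cone, and let v₁, v₂, v₃ ∈ C be linearly independent. Assume: (i) the span of {v₁, v₂} cuts out an extremal face of C, i.e. for all x, y ∈ C with x + y in the span of {v₁, v₂}, both x and y lie in the span of {v₁, v₂}; and (ii) every element x ∈ C can be written as x = α z + β v₁ with α ≥ 0, β ∈ ℝ, and z an element of C lying in the span of {v₂, v₃}. Then every element x of C lying in the span of {v₁, v₂} can be written as x = α' v₂ + β v₁ with α' ≥ 0 and β ∈ ℝ. -/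
/-!
Write `x = α • z + β • v₁` as in (ii). If `α > 0`, then `z` lies in both `span {v₁, v₂}` and
`span {v₂, v₃}`, which by linear independence meet in the line through `v₂`; so `z = a • v₂`,
and `a ≥ 0` because a salient cone containing `v₂ ≠ 0` cannot contain a negative multiple of it.
-/

open Submodule

theorem LinearIndependent.exists_smul_eq_of_mem_span_pair_inter
    {R M : Type*} [Ring R] [AddCommGroup M] [Module R M] {u v w z : M}
    (hind : LinearIndependent R ![u, v, w])
    (huv : z ∈ span R {u, v}) (hvw : z ∈ span R {v, w}) : ∃ a : R, a • v = z := by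
  obtain ⟨a, b, hab⟩ := mem_span_pair.mp hvw
  obtain ⟨c, d, hcd⟩ := mem_span_pair.mp huv
  have hrel : c • u + (d - a) • v + (-b) • w = 0 := by
    rw [sub_smul, neg_smul, ← sub_eq_zero.mpr (hcd.trans hab.symm)]
    abel
  have hcoef := Fintype.linearIndependent_iff.mp hind ![c, d - a, -b] (by
    simpa [Fin.sum_univ_three] using hrel)
  have hb : b = 0 := neg_eq_zero.mp (hcoef 2)
  exact ⟨a, by rw [← hab, hb, zero_smul, add_zero]⟩

theorem ConvexCone.Salient.nonneg_of_smul_mem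
    {𝕜 E : Type*} [Field 𝕜] [LinearOrder 𝕜] [IsStrictOrderedRing 𝕜]
    [AddCommGroup E] [Module 𝕜 E] {C : ConvexCone 𝕜 E} (hC : C.Salient)
    {v : E} (hv : v ∈ C) (hv0 : v ≠ 0) {a : 𝕜} (hav : a • v ∈ C) : 0 ≤ a := by
  by_contra! ha
  refine hC _ hav (smul_ne_zero ha.ne hv0) ?_
  rw [← neg_smul]
  exact C.smul_mem (neg_pos.mpr ha) hv

theorem stmt1_general
    (E : Type*) [AddCommGroup E] [Module ℝ E]
    (C : ConvexCone ℝ E)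
    (hsal : ∀ x ∈ C, -x ∈ C → x = 0)
    (v₁ v₂ v₃ : E) (hv₂ : v₂ ∈ C)
    (hindep : LinearIndependent ℝ ![v₁, v₂, v₃])
    (hdec : ∀ x ∈ C, ∃ α β : ℝ, ∃ z ∈ C, α ≥ 0 ∧
      z ∈ Submodule.span ℝ {v₂, v₃} ∧ x = α • z + β • v₁) :
    ∀ x ∈ C, x ∈ Submodule.span ℝ {v₁, v₂} →
      ∃ α' β : ℝ, α' ≥ 0 ∧ x = α' • v₂ + β • v₁ := by
  intro x hxC hx₁₂
  obtain ⟨α, β, z, hzC, hα, hz₂₃, rfl⟩ := hdec x hxC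
  rcases hα.eq_or_lt with rfl | hαpos
  · exact ⟨0, β, le_rfl, by simp⟩
  have hz₁₂ : z ∈ span ℝ {v₁, v₂} := by
    have hβv₁ : β • v₁ ∈ span ℝ {v₁, v₂} := smul_mem _ _ (subset_span (by simp))
    exact (smul_mem_iff _ hαpos.ne').mp ((Submodule.add_mem_iff_left _ hβv₁).mp hx₁₂)
  obtain ⟨a, rfl⟩ := hindep.exists_smul_eq_of_mem_span_pair_inter hz₁₂ hz₂₃
  have hsalient : C.Salient := fun y hy hy0 hny => hy0 (hsal y hy hny)
  have ha : 0 ≤ a := hsalient.nonneg_of_smul_mem hv₂ (hindep.ne_zero 1) hzC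
  exact ⟨α * a, β, mul_nonneg hα ha, by rw [smul_smul]⟩

/-- intermediate claim in the proof of Lemma 2.10 ("face2").
Let `E` be a real vector space, `C` a salient convex cone in `E`, and
`v₁, v₂, v₃ ∈ C` linearly independent.  Assume:
(i) the span of `{v₁, v₂}` cuts out an extremal face of `C`;
(ii) every `x ∈ C` can be written as `x = α • z + β • v₁` with `α ≥ 0`,
`β ∈ ℝ` and `z ∈ C` lying in `span {v₂, v₃}`.
Then every `x ∈ C` lying in `span {v₁, v₂}` can be written as
`x = α' • v₂ + β • v₁` with `α' ≥ 0`. -/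
theorem stmt1
    (E : Type*) [AddCommGroup E] [Module ℝ E]
    (C : ConvexCone ℝ E)
    (hsal : ∀ x ∈ C, -x ∈ C → x = 0)
    (v₁ v₂ v₃ : E) (hv₁ : v₁ ∈ C) (hv₂ : v₂ ∈ C) (hv₃ : v₃ ∈ C)
    (hindep : LinearIndependent ℝ ![v₁, v₂, v₃])
    (hface : ∀ x ∈ C, ∀ y ∈ C,
      x + y ∈ Submodule.span ℝ {v₁, v₂} →
      x ∈ Submodule.span ℝ {v₁, v₂} ∧ y ∈ Submodule.span ℝ {v₁, v₂})
    (hdec : ∀ x ∈ C, ∃ α β : ℝ, ∃ z ∈ C, α ≥ 0 ∧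
      z ∈ Submodule.span ℝ {v₂, v₃} ∧ x = α • z + β • v₁) :
    ∀ x ∈ C, x ∈ Submodule.span ℝ {v₁, v₂} →
      ∃ α' β : ℝ, α' ≥ 0 ∧ x = α' • v₂ + β • v₁ :=
  stmt1_general E C hsal v₁ v₂ v₃ hv₂ hindep hdec
end

section
/- Let E be a real vector space, let C ⊆ E be a salient convex cone, and let v₁, v₂, v₃ ∈ C be linearly independent. Assume: (i) the span of {v₁, v₂} cuts out an extremal face of C, i.e. for all x, y ∈ C with x + y in the span of {v₁, v₂}, both x and y lie in the span of {v₁, v₂}; and (ii) every element x ∈ C can be written as x = α z + β v₁ with α ≥ 0, β ∈ ℝ, and z an element of C lying in the span of {v₂, v₃}. Then the ray ℝ≥0·v₁ is extremal in C; that is, for all x, y ∈ C, if x + y = t v₁ for some t ≥ 0, then x and y are both nonnegative real multiples of v₁. -/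
/-!
By (i) both summands of `x + y = t • v₁` lie in the plane `span {v₁, v₂}`. Every element of `C`
in this plane has a nonnegative `v₂`-coordinate: in its decomposition `α • z + β • v₁` from (ii),
independence of `v₁, v₂, v₃` forces `α = 0` or `z ∈ ℝ v₂`, and salience forbids negative
multiples of `v₂` in `C`. The `v₂`-coordinates of `x` and `y` are nonnegative with sum `0`, so
both vanish, and salience again makes the remaining multiples of `v₁` nonnegative.
-/

section

variable {E : Type*} [AddCommGroup E] [Module ℝ E]

theorem ConvexCone.Salient.nonneg_of_smul_mem_s2 {C : ConvexCone ℝ E} (hC : C.Salient) {v : E}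
    (hv : v ∈ C) (hv0 : v ≠ 0) {r : ℝ} (hr : r • v ∈ C) : 0 ≤ r := by
  by_contra! hneg
  refine hC _ hr (smul_ne_zero hneg.ne hv0) ?_
  rw [← neg_smul]
  exact C.smul_mem (neg_pos.mpr hneg) hv

theorem LinearIndependent.eq_zero_of_smul_add_smul_add_smul_eq_zero {v₁ v₂ v₃ : E}
    (hindep : LinearIndependent ℝ ![v₁, v₂, v₃]) {a b c : ℝ}
    (h : a • v₁ + b • v₂ + c • v₃ = 0) : a = 0 ∧ b = 0 ∧ c = 0 := by
  have hcoeff := Fintype.linearIndependent_iff.mp hindep ![a, b, c]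
    (by simpa [Fin.sum_univ_three] using h)
  exact ⟨hcoeff 0, hcoeff 1, hcoeff 2⟩

theorem ConvexCone.Salient.coeff_nonneg_of_eq_smul_add_smul {C : ConvexCone ℝ E}
    (hC : C.Salient) {v₁ v₂ v₃ : E} (hv₂ : v₂ ∈ C) (hindep : LinearIndependent ℝ ![v₁, v₂, v₃])
    {p q α β : ℝ} {z : E} (hz : z ∈ C) (hα : 0 ≤ α) (hzspan : z ∈ Submodule.span ℝ {v₂, v₃})
    (hdec : p • v₁ + q • v₂ = α • z + β • v₁) : 0 ≤ q := by
  obtain ⟨r, s, rfl⟩ := Submodule.mem_span_pair.mp hzspan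
  have hrel : (p - β) • v₁ + (q - α * r) • v₂ + (-(α * s)) • v₃ = 0 := by
    linear_combination (norm := module) hdec
  obtain ⟨-, hq, hs⟩ := hindep.eq_zero_of_smul_add_smul_add_smul_eq_zero hrel
  rcases hα.eq_or_lt with rfl | hαpos
  · linarith
  obtain rfl : s = 0 := by simpa [hαpos.ne'] using hs
  have hr : 0 ≤ r := by
    refine hC.nonneg_of_smul_mem_s2 hv₂ (hindep.ne_zero 1) ?_
    simpa using hz
  calc 0 ≤ α * r := mul_nonneg hα hr
    _ = q := by linarith

end

theorem stmt2_general
    (E : Type*) [AddCommGroup E] [Module ℝ E]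
    (C : ConvexCone ℝ E)
    (hsal : ∀ x ∈ C, -x ∈ C → x = 0)
    (v₁ v₂ v₃ : E) (hv₁ : v₁ ∈ C) (hv₂ : v₂ ∈ C)
    (hindep : LinearIndependent ℝ ![v₁, v₂, v₃])
    (hface : ∀ x ∈ C, ∀ y ∈ C,
      x + y ∈ Submodule.span ℝ {v₁, v₂} →
      x ∈ Submodule.span ℝ {v₁, v₂} ∧ y ∈ Submodule.span ℝ {v₁, v₂})
    (hdec : ∀ x ∈ C, ∃ α β : ℝ, ∃ z ∈ C, α ≥ 0 ∧
      z ∈ Submodule.span ℝ {v₂, v₃} ∧ x = α • z + β • v₁) :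
    ∀ x ∈ C, ∀ y ∈ C, ∀ t : ℝ, t ≥ 0 → x + y = t • v₁ →
      (∃ s : ℝ, s ≥ 0 ∧ x = s • v₁) ∧ (∃ s : ℝ, s ≥ 0 ∧ y = s • v₁) := by
  intro x hx y hy t _ hxy
  have hC : C.Salient := fun u hu hu0 hneg => hu0 (hsal u hu hneg)
  have hv₂_coeff_nonneg : ∀ u ∈ C, ∀ p q : ℝ, p • v₁ + q • v₂ = u → 0 ≤ q := by
    intro u hu p q hpq
    obtain ⟨α, β, z, hz, hα, hzspan, rfl⟩ := hdec u hu
    exact hC.coeff_nonneg_of_eq_smul_add_smul hv₂ hindep hz hα hzspan hpq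
  obtain ⟨hxspan, hyspan⟩ := hface x hx y hy
    (Submodule.mem_span_pair.mpr ⟨t, 0, by rw [hxy, zero_smul, add_zero]⟩)
  obtain ⟨a, b, rfl⟩ := Submodule.mem_span_pair.mp hxspan
  obtain ⟨c, d, rfl⟩ := Submodule.mem_span_pair.mp hyspan
  have hrel : (a + c - t) • v₁ + (b + d) • v₂ + (0 : ℝ) • v₃ = 0 := by
    linear_combination (norm := module) hxy
  have hbd : b + d = 0 := (hindep.eq_zero_of_smul_add_smul_add_smul_eq_zero hrel).2.1
  have hb := hv₂_coeff_nonneg _ hx a b rfl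
  have hd := hv₂_coeff_nonneg _ hy c d rfl
  obtain ⟨rfl, rfl⟩ : b = 0 ∧ d = 0 := ⟨by linarith, by linarith⟩
  simp only [zero_smul, add_zero] at hx hy ⊢
  exact ⟨⟨a, hC.nonneg_of_smul_mem_s2 hv₁ (hindep.ne_zero 0) hx, rfl⟩,
    ⟨c, hC.nonneg_of_smul_mem_s2 hv₁ (hindep.ne_zero 0) hy, rfl⟩⟩

/-- convex-geometric content of Lemma 2.10 ("face2").
Let `E` be a real vector space, `C` a salient convex cone in `E`, and
`v₁, v₂, v₃ ∈ C` linearly independent.  Assume: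
(i) the span of `{v₁, v₂}` cuts out an extremal face of `C`;
(ii) every `x ∈ C` can be written as `x = α • z + β • v₁` with `α ≥ 0`,
`β ∈ ℝ` and `z ∈ C` lying in `span {v₂, v₃}`.
Then the ray `ℝ≥0 • v₁` is extremal in `C`: whenever `x, y ∈ C` and
`x + y = t • v₁` with `t ≥ 0`, both `x` and `y` are nonnegative multiples
of `v₁`. -/
theorem stmt2
    (E : Type*) [AddCommGroup E] [Module ℝ E]
    (C : ConvexCone ℝ E)
    (hsal : ∀ x ∈ C, -x ∈ C → x = 0)
    (v₁ v₂ v₃ : E) (hv₁ : v₁ ∈ C) (hv₂ : v₂ ∈ C) (hv₃ : v₃ ∈ C)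
    (hindep : LinearIndependent ℝ ![v₁, v₂, v₃])
    (hface : ∀ x ∈ C, ∀ y ∈ C,
      x + y ∈ Submodule.span ℝ {v₁, v₂} →
      x ∈ Submodule.span ℝ {v₁, v₂} ∧ y ∈ Submodule.span ℝ {v₁, v₂})
    (hdec : ∀ x ∈ C, ∃ α β : ℝ, ∃ z ∈ C, α ≥ 0 ∧
      z ∈ Submodule.span ℝ {v₂, v₃} ∧ x = α • z + β • v₁) :
    ∀ x ∈ C, ∀ y ∈ C, ∀ t : ℝ, t ≥ 0 → x + y = t • v₁ →
      (∃ s : ℝ, s ≥ 0 ∧ x = s • v₁) ∧ (∃ s : ℝ, s ≥ 0 ∧ y = s • v₁) :=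
  stmt2_general E C hsal v₁ v₂ v₃ hv₁ hv₂ hindep hface hdec
end
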